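/- arXiv:1905.10637 — 4 statements merged into one kernel-verified Lean document; each statement's English description precedes it below -/
import Mathlib

section
/- Let G be a finite abelian group that can be generated by e−1 elements, and let x₁,…,x_e ∈ G. Then there exists an e×e integer matrix M with trace 0 such that M·x = x, i.e., for every i, Σ_j M_{ij}·x_j = x_i. -/
/-- Any `e`-tuple (with `e ≥ 1`) in a group generated by `e - 1` elements admits a
"primitive" integer relation: a relation vector `u` together with `c` with
`∑ c i * u i = 1`. -/
theorem exists_primitive_relation
    {G : Type*} [AddCommGroup G] (e : ℕ) (he : 1 ≤ e)
    (hgen : ∃ S : Finset G, S.card ≤ e - 1 ∧ AddSubgroup.closure (S : Set G) = ⊤)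
    (x : Fin e → G) :
    ∃ u c : Fin e → ℤ, (∑ i, c i * u i) = 1 ∧ (∑ i, u i • x i) = 0 := by
  obtain ⟨S, hScard, hSclos⟩ := hgen
  -- enumerate `S` by a function on `Fin (e-1)`
  set s : Fin (e - 1) → G :=
    fun i => if h : (i : ℕ) < S.toList.length then S.toList[(i : ℕ)] else 0 with hs
  have hSsub : (S : Set G) ⊆ Set.range s := by
    intro a ha
    rw [Finset.mem_coe, ← Finset.mem_toList] at ha
    obtain ⟨k, hk, hk2⟩ := List.getElem_of_mem ha
    have hklt : k < e - 1 := lt_of_lt_of_le (by simpa using hk) hScard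
    exact ⟨⟨k, hklt⟩, by simp only [hs]; exact (dif_pos hk).trans hk2⟩
  -- every `x i` is an integer combination of the `s j`
  have hxmem : ∀ i, x i ∈ Submodule.span ℤ (Set.range s) := by
    intro i
    have : x i ∈ AddSubgroup.closure (Set.range s) := by
      have := (AddSubgroup.closure_mono hSsub)
      rw [hSclos] at this
      exact this (AddSubgroup.mem_top _)
    rwa [← Submodule.span_int_eq_addSubgroupClosure, Submodule.mem_toAddSubgroup] at this
  choose A hA using fun i => (Submodule.mem_span_range_iff_exists_fun ℤ).mp (hxmem i)
  -- the matrix of coefficients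
  set B : Matrix (Fin e) (Fin (e - 1)) ℤ := Matrix.of A with hB
  -- the left-kernel of `B` contains a nonzero vector
  have hnotinj : ¬ Function.Injective (Matrix.vecMulLinear B) := by
    intro hinj
    have hrank := LinearMap.rank_le_of_injective _ hinj
    rw [rank_fin_fun, rank_fin_fun] at hrank
    have : (e : ℕ) ≤ e - 1 := by exact_mod_cast hrank
    omega
  rw [← LinearMap.ker_eq_bot] at hnotinj
  obtain ⟨u, humem, hune⟩ := Submodule.exists_mem_ne_zero_of_ne_bot hnotinj
  have huker : Matrix.vecMul u B = 0 := humem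
  -- the ideal generated by the entries of `u`
  obtain ⟨d, hd⟩ := (IsPrincipalIdealRing.principal (Ideal.span (Set.range u))).principal
  have hddvd : ∀ i, d ∣ u i := by
    intro i
    have : u i ∈ Ideal.span (Set.range u) := Ideal.subset_span ⟨i, rfl⟩
    rw [hd] at this
    exact Ideal.mem_span_singleton.mp this
  have hdmem : d ∈ Ideal.span (Set.range u) := by
    rw [hd]; exact Ideal.mem_span_singleton_self d
  obtain ⟨c, hc⟩ := (Submodule.mem_span_range_iff_exists_fun ℤ).mp hdmem
  have hdne : d ≠ 0 := by
    rintro rfl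
    apply hune
    funext i
    simpa using hddvd i
  set u' : Fin e → ℤ := fun i => u i / d with hu'
  have hdu' : ∀ i, d * u' i = u i := fun i => Int.mul_ediv_cancel' (hddvd i)
  refine ⟨u', c, ?_, ?_⟩
  · -- ∑ c i * u' i = 1
    have : d * (∑ i, c i * u' i) = d * 1 := by
      rw [Finset.mul_sum, mul_one]
      calc ∑ i, d * (c i * u' i) = ∑ i, c i * u i := by
            refine Finset.sum_congr rfl fun i _ => ?_
            rw [← hdu' i]; ring
        _ = d := by simpa [smul_eq_mul] using hc
    exact mul_left_cancel₀ hdne this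
  · -- ∑ u' i • x i = 0
    have hker' : Matrix.vecMul u' B = 0 := by
      have h1 : Matrix.vecMul (d • u') B = 0 := by
        have : d • u' = u := funext fun i => by simpa [smul_eq_mul] using hdu' i
        rw [this, huker]
      rw [Matrix.smul_vecMul] at h1
      exact (smul_eq_zero_iff_right (by exact_mod_cast hdne)).mp h1
    calc ∑ i, u' i • x i = ∑ i, u' i • ∑ j, A i j • s j := by
          refine Finset.sum_congr rfl fun i _ => by rw [hA i]
      _ = ∑ i, ∑ j, (u' i * A i j) • s j := by
          refine Finset.sum_congr rfl fun i _ => ?_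
          rw [Finset.smul_sum]
          exact Finset.sum_congr rfl fun j _ => (mul_smul _ _ _).symm
      _ = ∑ j, ∑ i, (u' i * A i j) • s j := Finset.sum_comm
      _ = ∑ j, (∑ i, u' i * A i j) • s j := by
          exact Finset.sum_congr rfl fun j _ => (Finset.sum_smul).symm
      _ = 0 := by
          refine Finset.sum_eq_zero fun j _ => ?_
          have : (∑ i, u' i * A i j) = Matrix.vecMul u' B j := by
            simp [Matrix.vecMul, dotProduct, hB]
          rw [this, hker']
          simp

/-- If a finite abelian group `G` can be generated by `e - 1` elements, then for any
`x₁, …, x_e ∈ G` there is an `e × e` integer matrix `M` of trace zero with `M · x = x`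
componentwise. -/
theorem trace_zero_matrix_fixes_of_gen_le_pred
    {G : Type*} [AddCommGroup G] [Finite G] (e : ℕ) (he : 1 ≤ e)
    (hgen : ∃ S : Finset G, S.card ≤ e - 1 ∧ AddSubgroup.closure (S : Set G) = ⊤)
    (x : Fin e → G) :
    ∃ M : Matrix (Fin e) (Fin e) ℤ, M.trace = 0 ∧
      ∀ i, ∑ j, M i j • x j = x i := by
  obtain ⟨u, c, hcu, hrel⟩ := exists_primitive_relation e he hgen x
  refine ⟨Matrix.of fun i j => (if i = j then 1 else 0) - (e * c i) * u j, ?_, ?_⟩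
  · have h0 : (Matrix.of fun i j => (if i = j then (1:ℤ) else 0) - (e * c i) * u j).trace
        = ∑ i : Fin e, ((if i = i then (1:ℤ) else 0) - (e * c i) * u i) := rfl
    rw [h0, Finset.sum_sub_distrib]
    simp only [if_pos rfl, Finset.sum_const, Finset.card_univ, Fintype.card_fin,
      nsmul_eq_mul, mul_one]
    have h2 : ∑ i, (e:ℤ) * c i * u i = (e:ℤ) * ∑ i, c i * u i := by
      rw [Finset.mul_sum]
      exact Finset.sum_congr rfl fun i _ => by ring
    rw [h2, hcu, mul_one]
    simp
  · intro i
    simp only [Matrix.of_apply, sub_smul, Finset.sum_sub_distrib, ite_smul, one_smul, zero_smul,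
      Finset.sum_ite_eq, Finset.mem_univ, if_pos]
    have : ∑ j, ((e : ℤ) * c i * u j) • x j = ((e : ℤ) * c i) • ∑ j, u j • x j := by
      rw [Finset.smul_sum]
      exact Finset.sum_congr rfl fun j _ => by rw [mul_smul]
    rw [this, hrel, smul_zero, sub_zero]
end

section
/- Let G be a finite abelian group and x₁,…,x_e ∈ G. For each i let αᵢ be the least positive integer n such that n·xᵢ lies in the subgroup generated by the x_j for j ≠ i. Assume that for every prime p dividing gcd(α₁,…,α_e), the subgroup ⟨x₁,…,x_e⟩[p] is generated by fewer than e elements. Then gcd(α₁,…,α_e) = 1. -/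
/-- Reduce an integer scalar mod `p` on a `p`-torsion element. -/
lemma zsmul_reduce_mod {M : Type*} [AddCommGroup M] (p : ℕ) [NeZero p] (a : ℤ) (z : M)
    (hz : (p : ℤ) • z = 0) : a • z = (((a : ZMod p).val : ℤ)) • z := by
  have hdvd : (p : ℤ) ∣ a - ((a : ZMod p).val : ℤ) := by
    rw [← ZMod.intCast_zmod_eq_zero_iff_dvd]
    push_cast
    rw [ZMod.natCast_val, ZMod.cast_id, sub_self]
  obtain ⟨t, ht⟩ := hdvd
  have h : a • z - (((a : ZMod p).val : ℤ)) • z = 0 := by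
    rw [← sub_smul, ht, mul_comm, mul_smul, hz, smul_zero]
  rw [sub_eq_zero] at h
  exact h

/-- Let `αᵢ` be the least positive integer `n` with `n·xᵢ ∈ ⟨x_j : j ≠ i⟩`.  If for every
prime `p` dividing `gcd(α₁,…,α_e)` the `p`-torsion of `⟨x₁,…,x_e⟩` is generated by fewer
than `e` elements, then `gcd(α₁,…,α_e) = 1`. -/
theorem gcd_min_relation_orders_eq_one
    {G : Type*} [AddCommGroup G] [Finite G] (e : ℕ) (he : 1 ≤ e)
    (x : Fin e → G) (α : Fin e → ℕ)
    (hmin : ∀ i, 0 < α i ∧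
      α i • x i ∈ AddSubgroup.closure {g : G | ∃ j, j ≠ i ∧ g = x j} ∧
      ∀ n : ℕ, 0 < n → n • x i ∈ AddSubgroup.closure {g : G | ∃ j, j ≠ i ∧ g = x j} →
        α i ≤ n)
    (hp : ∀ p : ℕ, p.Prime → p ∣ Finset.univ.gcd α →
      ∃ S : Finset G,
        (S : Set G) ⊆ {g : G | g ∈ AddSubgroup.closure (Set.range x) ∧ p • g = 0} ∧
        S.card < e ∧
        ∀ g : G, g ∈ AddSubgroup.closure (Set.range x) → p • g = 0 →
          g ∈ AddSubgroup.closure (S : Set G)) :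
    Finset.univ.gcd α = 1 := by
  classical
  by_contra hne
  set p := (Finset.univ.gcd α).minFac with hpdef
  have hpp : p.Prime := Nat.minFac_prime hne
  haveI : NeZero p := ⟨hpp.ne_zero⟩
  have hpd : p ∣ Finset.univ.gcd α := Nat.minFac_dvd _
  obtain ⟨S, hS1, hS2, hS3⟩ := hp p hpp hpd
  set H := AddSubgroup.closure (Set.range x) with hHdef
  have hxmem : ∀ i, x i ∈ H := fun i => AddSubgroup.subset_closure ⟨i, rfl⟩
  -- membership in H as integer combination
  have key : ∀ g ∈ H, ∃ c : Fin e → ℤ, ∑ i, c i • x i = g := by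
    intro g hg
    rw [hHdef, ← Submodule.span_int_eq_addSubgroupClosure, Submodule.mem_toAddSubgroup] at hg
    exact (Submodule.mem_span_range_iff_exists_fun ℤ).mp hg
  let φ : ↥H →+ ↥H := nsmulAddMonoidHom p
  have hφ : ∀ h : ↥H, φ h = p • h := fun _ => rfl
  -- card of kernel ≤ p ^ S.card
  have hSmem : ∀ s : ↥S, (s : G) ∈ H := fun s => (hS1 s.2).1
  have hStor : ∀ s : ↥S, (p : ℤ) • ((s : G) : G) = 0 := by
    intro s
    have := (hS1 s.2).2
    rwa [natCast_zsmul]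
  have hz : ∀ s : ↥S, (p : ℤ) • (⟨(s : G), hSmem s⟩ : ↥H) = 0 := by
    intro s
    apply Subtype.ext
    have := hStor s
    push_cast
    exact this
  let ψ : (↥S → ZMod p) → ↥φ.ker := fun c =>
    ⟨∑ s : ↥S, ((c s).val : ℤ) • (⟨(s : G), hSmem s⟩ : ↥H), by
      rw [AddMonoidHom.mem_ker, hφ, Finset.smul_sum]
      apply Finset.sum_eq_zero
      intro s _
      rw [← natCast_zsmul, smul_comm, hz, smul_zero]⟩
  have hψsurj : Function.Surjective ψ := by
    rintro ⟨⟨g, hgH⟩, hk⟩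
    rw [AddMonoidHom.mem_ker, hφ] at hk
    have hgtor : p • g = 0 := by
      have := congrArg (Subtype.val) hk
      push_cast at this
      exact this
    have hclos : g ∈ AddSubgroup.closure (S : Set G) := hS3 g hgH hgtor
    rw [← Submodule.span_int_eq_addSubgroupClosure, Submodule.mem_toAddSubgroup] at hclos
    obtain ⟨f, -, hf⟩ := Submodule.mem_span_finset.mp hclos
    refine ⟨fun s => ((f s : ℤ) : ZMod p), ?_⟩
    apply Subtype.ext
    apply Subtype.ext
    simp only [ψ, AddSubgroup.val_finsetSum]
    push_cast
    show ∑ s : ↥S, (((f (s : G) : ZMod p)).val : ℤ) • ((s : G) : G) = g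
    rw [← hf, ← Finset.sum_attach S (fun i => f i • i)]
    exact Finset.sum_congr rfl fun s _ => (zsmul_reduce_mod p (f s) _ (hStor s)).symm
  have hker_le : Nat.card ↥φ.ker ≤ p ^ S.card := by
    calc Nat.card ↥φ.ker ≤ Nat.card (↥S → ZMod p) :=
          Nat.card_le_card_of_surjective ψ hψsurj
      _ = p ^ S.card := by
          rw [Nat.card_fun, Nat.card_eq_fintype_card, Nat.card_eq_fintype_card,
            ZMod.card, Fintype.card_coe]
  -- the quotient H ⧸ pH has the same cardinality as the kernel
  have hQcard : Nat.card (↥H ⧸ φ.range) = Nat.card ↥φ.ker := by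
    have h1 := AddSubgroup.card_eq_card_quotient_mul_card_addSubgroup (α := ↥H) φ.range
    have h2 := AddSubgroup.card_eq_card_quotient_mul_card_addSubgroup (α := ↥H) φ.ker
    have h3 : Nat.card (↥H ⧸ φ.ker) = Nat.card ↥φ.range :=
      Nat.card_congr (QuotientAddGroup.quotientKerEquivRange φ).toEquiv
    have hr : 0 < Nat.card ↥φ.range := Nat.card_pos
    rw [h3] at h2
    rw [h2] at h1
    have := h1.symm
    rw [mul_comm (Nat.card ↥φ.range)] at this
    exact Nat.eq_of_mul_eq_mul_right hr this
  -- pigeonhole in the quotient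
  let xH : Fin e → ↥H := fun i => ⟨x i, hxmem i⟩
  let q : Fin e → (↥H ⧸ φ.range) := fun i => QuotientAddGroup.mk (xH i)
  have hqtor : ∀ i, (p : ℤ) • q i = 0 := by
    intro i
    rw [natCast_zsmul]
    show ((p • xH i : ↥H) : ↥H ⧸ φ.range) = 0
    rw [QuotientAddGroup.eq_zero_iff]
    exact ⟨xH i, rfl⟩
  let F : (Fin e → ZMod p) → (↥H ⧸ φ.range) := fun c => ∑ i, ((c i).val : ℤ) • q i
  have hFsurj : Function.Surjective F := by
    intro qq
    obtain ⟨h, rfl⟩ := QuotientAddGroup.mk_surjective qq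
    obtain ⟨c, hc⟩ := key (h : G) h.2
    refine ⟨fun i => ((c i : ℤ) : ZMod p), ?_⟩
    have hsum : ∑ i, c i • q i = QuotientAddGroup.mk h := by
      have : (∑ i, c i • xH i : ↥H) = h := by
        apply Subtype.ext
        push_cast
        exact hc
      rw [← this]
      exact (map_sum (QuotientAddGroup.mk' φ.range) _ _).symm ▸ rfl
    rw [← hsum]
    exact Finset.sum_congr rfl fun i _ => (zsmul_reduce_mod p (c i) (q i) (hqtor i)).symm
  have hlt : Nat.card (↥H ⧸ φ.range) < Nat.card (Fin e → ZMod p) := by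
    rw [hQcard, Nat.card_fun, Nat.card_eq_fintype_card (α := ZMod p),
      Nat.card_eq_fintype_card (α := Fin e), ZMod.card, Fintype.card_fin]
    exact lt_of_le_of_lt hker_le (Nat.pow_lt_pow_right hpp.one_lt hS2)
  have hninj : ¬ Function.Injective F := fun hinj =>
    absurd (Nat.card_le_card_of_injective F hinj) (not_le.mpr hlt)
  rw [Function.not_injective_iff] at hninj
  obtain ⟨c, c', hcc, hne'⟩ := hninj
  -- extract an integer relation
  obtain ⟨i₀, hi₀⟩ : ∃ i, c i ≠ c' i := by
    by_contra hall
    push_neg at hall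
    exact hne' (funext hall)
  set n : Fin e → ℤ := fun i => ((c i).val : ℤ) - ((c' i).val : ℤ) with hn
  have hrel : (∑ i, n i • xH i : ↥H) ∈ φ.range := by
    rw [← QuotientAddGroup.eq_zero_iff]
    have : ((∑ i, n i • xH i : ↥H) : ↥H ⧸ φ.range) = ∑ i, n i • q i := by
      exact (map_sum (QuotientAddGroup.mk' φ.range) _ _) ▸ rfl
    rw [this]
    have : ∑ i, n i • q i = F c - F c' := by
      rw [← Finset.sum_sub_distrib]
      exact Finset.sum_congr rfl fun i _ => by rw [hn, sub_smul]
    rw [this, hcc, sub_self]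
  obtain ⟨h, hh⟩ := hrel
  -- pass to G
  obtain ⟨m, hm⟩ := key (h : G) h.2
  have hrelG : ∑ i, n i • x i = ∑ i, (p * m i) • x i := by
    have h1 : ((∑ i, n i • xH i : ↥H) : G) = ∑ i, n i • x i := by push_cast; rfl
    have h2 : ((φ h : ↥H) : G) = p • (h : G) := by rw [hφ]; push_cast; rfl
    rw [← h1, ← hh, h2, ← hm, Finset.smul_sum]
    exact Finset.sum_congr rfl fun i _ => by
      rw [← natCast_zsmul, smul_comm, smul_smul, mul_comm]
  have hzero : ∑ i, (n i - p * m i) • x i = 0 := by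
    rw [← sub_eq_zero] at hrelG
    rw [← hrelG, ← Finset.sum_sub_distrib]
    exact Finset.sum_congr rfl fun i _ => by rw [sub_smul]
  set N : ℤ := n i₀ - p * m i₀ with hN
  have hmemC : N • x i₀ ∈ AddSubgroup.closure {g : G | ∃ j, j ≠ i₀ ∧ g = x j} := by
    have hsplit := Finset.add_sum_erase Finset.univ (fun i => (n i - p * m i) • x i)
      (Finset.mem_univ i₀)
    rw [hzero] at hsplit
    have : N • x i₀ = - ∑ j ∈ Finset.univ.erase i₀, (n j - p * m j) • x j := by
      rw [hN]; linear_combination (norm := abel) hsplit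
    rw [this]
    apply neg_mem
    refine sum_mem fun j hj => zsmul_mem (AddSubgroup.subset_closure ?_) _
    exact ⟨j, (Finset.mem_erase.mp hj).1, rfl⟩
  -- p does not divide N
  have hpnN : ¬ ((p : ℤ) ∣ N) := by
    intro hdvd
    have hdn : (p : ℤ) ∣ n i₀ := by
      have hnn : n i₀ = N + (p : ℤ) * m i₀ := by rw [hN]; ring
      rw [hnn]
      exact dvd_add hdvd (Dvd.intro _ rfl)
    have hv : ((c i₀).val : ℤ) < p := by exact_mod_cast ZMod.val_lt _
    have hv' : ((c' i₀).val : ℤ) < p := by exact_mod_cast ZMod.val_lt _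
    have hvnn : (0 : ℤ) ≤ ((c i₀).val : ℤ) := Int.natCast_nonneg _
    have hvnn' : (0 : ℤ) ≤ ((c' i₀).val : ℤ) := Int.natCast_nonneg _
    have habs : |n i₀| < (p : ℤ) := by
      rw [hn, abs_sub_lt_iff]
      constructor <;> linarith
    have hn0 : n i₀ = 0 := Int.eq_zero_of_abs_lt_dvd hdn habs
    apply hi₀
    have : (c i₀).val = (c' i₀).val := by
      rw [hn] at hn0
      simp only at hn0
      omega
    calc c i₀ = ((c i₀).val : ZMod p) := by rw [ZMod.natCast_val, ZMod.cast_id]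
      _ = ((c' i₀).val : ZMod p) := by rw [this]
      _ = c' i₀ := by rw [ZMod.natCast_val, ZMod.cast_id]
  -- minimality gives α i₀ ∣ N
  have hαdvd : (α i₀ : ℤ) ∣ N := by
    set A := (α i₀ : ℤ) with hA
    have hApos : 0 < A := by rw [hA]; exact_mod_cast (hmin i₀).1
    have hr0 : N % A = 0 := by
      by_contra hr
      have hrpos : 0 < N % A := lt_of_le_of_ne (Int.emod_nonneg N hApos.ne') (Ne.symm hr)
      have hrlt : N % A < A := Int.emod_lt_of_pos N hApos
      have hmemr : (N % A) • x i₀ ∈ AddSubgroup.closure {g : G | ∃ j, j ≠ i₀ ∧ g = x j} := by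
        have : N % A = N - A * (N / A) := by rw [Int.emod_def]
        rw [this, sub_smul, mul_comm, mul_smul]
        apply sub_mem hmemC
        apply zsmul_mem
        have := (hmin i₀).2.1
        rwa [← natCast_zsmul] at this
      have hnat : ((N % A).toNat) • x i₀ ∈ AddSubgroup.closure {g : G | ∃ j, j ≠ i₀ ∧ g = x j} := by
        rw [← natCast_zsmul, Int.toNat_of_nonneg hrpos.le]
        exact hmemr
      have := (hmin i₀).2.2 (N % A).toNat (by omega) hnat
      omega
    exact Int.dvd_of_emod_eq_zero hr0
  -- but p ∣ α i₀, contradiction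
  have hpα : (p : ℤ) ∣ (α i₀ : ℤ) := by
    exact_mod_cast Int.natCast_dvd_natCast.mpr (hpd.trans (Finset.gcd_dvd (Finset.mem_univ i₀)))
  exact hpnN (hpα.trans hαdvd)
end

section
/- Let G be a finite abelian group, e ≥ 1, and x₁,…,x_e ∈ G. Suppose that there exist integers α₁,…,α_e with gcd(α₁,…,α_e) = 1 and, for each i, a relation αᵢ·xᵢ + Σ_{j≠i} m_{ij}·x_j = 0 with integers m_{ij}. Then there exists an e×e integer matrix M with trace 0 such that M·x = x componentwise. (Explicitly, choose integers a₁,…,a_e with Σ aᵢαᵢ = e and set M_{ii} = 1 − aᵢαᵢ, M_{ij} = aᵢ m_{ij} for j ≠ i.) -/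
lemma finset_gcd_mem_span {ι : Type*} (s : Finset ι) (f : ι → ℤ) :
    (s.gcd f : ℤ) ∈ Ideal.span (f '' s) := by
  classical
  induction s using Finset.induction_on with
  | empty => simp [Finset.gcd_empty]
  | @insert a s ha ih =>
    rw [Finset.gcd_insert]
    simp only [Finset.coe_insert]
    have h1 : f a ∈ Ideal.span (f '' insert a s) :=
      Ideal.subset_span ⟨a, by simp, rfl⟩
    have h2 : (s.gcd f : ℤ) ∈ Ideal.span (f '' insert a s) := by
      refine Ideal.span_mono ?_ ih
      intro y hy; obtain ⟨i, hi, rfl⟩ := hy; exact ⟨i, by simp [hi], rfl⟩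
    obtain ⟨u, v, huv⟩ := exists_gcd_eq_mul_add_mul (f a) (s.gcd f)
    rw [huv]
    exact Ideal.add_mem _ (Ideal.mul_mem_right _ _ h1) (Ideal.mul_mem_right _ _ h2)

/-- If there are relations `αᵢ·xᵢ + Σ_{j≠i} m_{ij}·x_j = 0` in a finite abelian group with
`gcd(α₁,…,α_e) = 1`, then some trace-zero integer matrix `M` satisfies `M·x = x`. -/
theorem trace_zero_matrix_fixes_of_relations
    {G : Type*} [AddCommGroup G] [Finite G] (e : ℕ) (he : 1 ≤ e)
    (x : Fin e → G) (α : Fin e → ℤ) (m : Fin e → Fin e → ℤ)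
    (hgcd : Finset.univ.gcd α = 1)
    (hrel : ∀ i, α i • x i + ∑ j ∈ Finset.univ.erase i, m i j • x j = 0) :
    ∃ M : Matrix (Fin e) (Fin e) ℤ, M.trace = 0 ∧
      ∀ i, ∑ j, M i j • x j = x i := by
  classical
  have hmem : (1 : ℤ) ∈ Ideal.span (Set.range α) := by
    have := finset_gcd_mem_span Finset.univ α
    rw [hgcd] at this
    simpa [Set.image_univ] using this
  obtain ⟨b, hb⟩ := Ideal.mem_span_range_iff_exists_fun.mp hmem
  set a : Fin e → ℤ := fun i => (e : ℤ) * b i with ha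
  refine ⟨fun i j => if i = j then 1 - a i * α i else -(a i) * m i j, ?_, ?_⟩
  · have : ∑ i, a i * α i = (e : ℤ) := by
      simp only [ha, mul_assoc, ← Finset.mul_sum, hb, mul_one]
    simp [Matrix.trace, Matrix.diag, Finset.sum_sub_distrib, this,
      Finset.card_univ]
  · intro i
    rw [← Finset.add_sum_erase _ _ (Finset.mem_univ i)]
    have h2 : ∑ j ∈ Finset.univ.erase i,
        (if i = j then 1 - a i * α i else -(a i) * m i j) • x j
        = -(a i) • ∑ j ∈ Finset.univ.erase i, m i j • x j := by
      rw [Finset.smul_sum]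
      refine Finset.sum_congr rfl fun j hj => ?_
      rw [Finset.mem_erase] at hj
      rw [if_neg (Ne.symm hj.1), mul_smul]
    have h1 : (fun i j => if i = j then 1 - a i * α i else -(a i) * m i j) i i
        = 1 - a i * α i := by simp
    rw [h2, h1, sub_smul, one_smul, mul_smul]
    have := hrel i
    have h3 : ∑ j ∈ Finset.univ.erase i, m i j • x j = -(α i • x i) := by
      linear_combination (norm := abel) this
    rw [h3]
    simp only [smul_neg, neg_smul, neg_neg]
    abel
end

section
/- Local–global failure in the abstract setting: let R = ℤ_ℓ, let B be an R-module, and let {r_v : B → B_v} be a family of R-module homomorphisms to finite R-modules B_v. Let e ≥ 2 and x₁,…,x_e ∈ B be R-linearly independent elements such that B is torsion-free on the submodule they generate. Assume that for every v, the subgroup of B_v generated by r_v(x₁),…,r_v(x_e) can be generated by e−1 elements. Set P = (x₁,…,x_e) ∈ B^e and Λ = { M·x : M ∈ Mat_{e×e}(R), tr(M) = 0 } ⊆ B^e, with the reductions r_v applied componentwise to B^e. Then r_v(P) ∈ r_v(Λ) for every v, but P ∉ Λ. -/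
/-- Key finite lemma: if `y : Fin e → A` lands in the `ℤ_ℓ`-span of a finite set of
size `< e`, then there is a trace-zero matrix over `ℤ_ℓ` fixing `y`. -/
theorem trace_zero_fix
    (ℓ : ℕ) [Fact ℓ.Prime] {A : Type*} [AddCommGroup A] [Module ℤ_[ℓ] A]
    (e : ℕ) (he : 2 ≤ e) (S : Finset A) (hScard : S.card ≤ e - 1)
    (y : Fin e → A) (hyS : ∀ i, y i ∈ Submodule.span ℤ_[ℓ] (S : Set A)) :
    ∃ M : Matrix (Fin e) (Fin e) ℤ_[ℓ], M.trace = 0 ∧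
      ∀ i, ∑ j, M i j • y j = y i := by
  choose f hf using fun i => (Submodule.mem_span_finset.1 (hyS i)).imp fun _ h => h.2
  -- the coefficient vectors over ℚ_ℓ are linearly dependent
  have hcard : Fintype.card (↥S) < Fintype.card (Fin e) := by
    simp only [Fintype.card_coe, Fintype.card_fin]; omega
  have hnotli : ¬ LinearIndependent ℚ_[ℓ]
      (fun i : Fin e => fun s : ↥S => ((f i s : ℤ_[ℓ]) : ℚ_[ℓ])) := by
    intro h
    have h1 := h.fintype_card_le_finrank
    rw [Module.finrank_fintype_fun_eq_card] at h1
    omega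
  obtain ⟨g, hg0, i₁, hgne⟩ := Fintype.not_linearIndependent_iff.1 hnotli
  obtain ⟨i₀, -, hmax⟩ := Finset.exists_max_image Finset.univ (fun i => ‖g i‖)
    ⟨i₁, Finset.mem_univ _⟩
  have hgi₀ : g i₀ ≠ 0 := by
    intro h0
    have := hmax i₁ (Finset.mem_univ _)
    rw [h0] at this
    simp at this
    exact hgne this
  set c : Fin e → ℤ_[ℓ] := fun i => ⟨g i / g i₀, by
    rw [norm_div]
    exact div_le_one_of_le₀ (hmax i (Finset.mem_univ _)) (norm_nonneg _)⟩ with hc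
  have hci₀ : c i₀ = 1 := by
    apply Subtype.ext
    show g i₀ / g i₀ = (1 : ℚ_[ℓ])
    field_simp
  -- the relation ∑ c i • y i = 0
  have hcoef : ∀ s ∈ S, ∑ i, c i * f i s = 0 := by
    intro s hs
    have heval : ∑ i, g i * ((f i s : ℤ_[ℓ]) : ℚ_[ℓ]) = 0 := by
      simpa using congrFun hg0 ⟨s, hs⟩
    have h2 : ∑ i, ((c i : ℚ_[ℓ])) * ((f i s : ℤ_[ℓ]) : ℚ_[ℓ]) = 0 := by
      have hcc : ∀ i, (c i : ℚ_[ℓ]) = g i / g i₀ := fun i => rfl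
      simp only [hcc]
      have : ∑ i, (g i / g i₀) * ((f i s : ℤ_[ℓ]) : ℚ_[ℓ])
          = (∑ i, g i * ((f i s : ℤ_[ℓ]) : ℚ_[ℓ])) / g i₀ := by
        rw [Finset.sum_div]
        congr 1; ext i; ring
      rw [this, heval, zero_div]
    apply Subtype.ext
    have hpush : ((∑ i, c i * f i s : ℤ_[ℓ]) : ℚ_[ℓ])
        = ∑ i, ((c i : ℚ_[ℓ])) * ((f i s : ℤ_[ℓ]) : ℚ_[ℓ]) := by
      rw [show ((∑ i, c i * f i s : ℤ_[ℓ]) : ℚ_[ℓ])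
          = PadicInt.Coe.ringHom (∑ i, c i * f i s) from rfl, map_sum]
      rfl
    rw [hpush, h2]
    rfl
  have hrel : ∑ i, c i • y i = 0 := by
    calc ∑ i, c i • y i = ∑ i, c i • ∑ s ∈ S, f i s • s := by
          simp only [hf]
    _ = ∑ i, ∑ s ∈ S, (c i * f i s) • s := by
          simp only [Finset.smul_sum, mul_smul]
    _ = ∑ s ∈ S, ∑ i, (c i * f i s) • s := Finset.sum_comm
    _ = ∑ s ∈ S, (∑ i, c i * f i s) • s := by
          simp only [Finset.sum_smul]
    _ = 0 := by
          apply Finset.sum_eq_zero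
          intro s hs
          rw [hcoef s hs, zero_smul]
  refine ⟨fun i j => (if i = j then 1 else 0) + (if i = i₀ then -(e:ℤ_[ℓ]) else 0) * c j,
    ?_, ?_⟩
  · show ∑ i, ((if i = i then (1:ℤ_[ℓ]) else 0) + (if i = i₀ then -(e:ℤ_[ℓ]) else 0) * c i) = 0
    rw [Finset.sum_add_distrib]
    have h1 : ∑ i : Fin e, (if i = i then (1:ℤ_[ℓ]) else 0) = (e : ℤ_[ℓ]) := by simp
    have h2 : ∑ i : Fin e, (if i = i₀ then -(e:ℤ_[ℓ]) else 0) * c i = -(e:ℤ_[ℓ]) := by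
      rw [Finset.sum_eq_single i₀]
      · simp [hci₀]
      · intro j _ hj; simp [hj]
      · intro h; exact absurd (Finset.mem_univ i₀) h
    rw [h1, h2, add_neg_cancel]
  · intro i
    have hsplit : ∑ j, ((if i = j then (1:ℤ_[ℓ]) else 0)
          + (if i = i₀ then -(e:ℤ_[ℓ]) else 0) * c j) • y j
        = (∑ j, (if i = j then (1:ℤ_[ℓ]) else 0) • y j)
          + (if i = i₀ then -(e:ℤ_[ℓ]) else 0) • ∑ j, c j • y j := by
      rw [Finset.smul_sum, ← Finset.sum_add_distrib]
      congr 1; ext j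
      rw [add_smul, mul_smul]
    rw [hsplit, hrel, smul_zero, add_zero]
    simp [ite_smul]

/-- Local–global failure in the abstract setting over `ℤ_ℓ`: if `x₁,…,x_e` are linearly
independent, the span they generate is torsion-free, and every reduction
`⟨r_v x₁,…,r_v x_e⟩` is generated by `e − 1` elements, then the vector `P = (x₁,…,x_e)`
reduces into `r_v(Λ)` for every `v` but does not lie in
`Λ = {M·x : M ∈ Mat_{e×e}(ℤ_ℓ), tr M = 0}`. -/
theorem local_global_failure_padic
    (ℓ : ℕ) [Fact ℓ.Prime]
    {B : Type*} [AddCommGroup B] [Module ℤ_[ℓ] B]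
    {ι : Type*} {Bv : ι → Type*} [∀ v, AddCommGroup (Bv v)] [∀ v, Module ℤ_[ℓ] (Bv v)]
    [∀ v, Finite (Bv v)]
    (r : ∀ v, B →ₗ[ℤ_[ℓ]] Bv v)
    (e : ℕ) (he : 2 ≤ e) (x : Fin e → B)
    (hli : LinearIndependent ℤ_[ℓ] x)
    (htf : ∀ b ∈ Submodule.span ℤ_[ℓ] (Set.range x),
      ∀ n : ℤ, n ≠ 0 → n • b = 0 → b = 0)
    (hgen : ∀ v, ∃ S : Finset (Bv v), S.card ≤ e - 1 ∧
      AddSubgroup.closure (Set.range fun i => r v (x i)) =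
        AddSubgroup.closure (S : Set (Bv v))) :
    (∀ v, ∃ M : Matrix (Fin e) (Fin e) ℤ_[ℓ], M.trace = 0 ∧
        ∀ i, ∑ j, M i j • r v (x j) = r v (x i)) ∧
    ¬ ∃ M : Matrix (Fin e) (Fin e) ℤ_[ℓ], M.trace = 0 ∧
        ∀ i, ∑ j, M i j • x j = x i := by
  constructor
  · intro v
    obtain ⟨S, hScard, hSclos⟩ := hgen v
    have hyS : ∀ i, r v (x i) ∈ Submodule.span ℤ_[ℓ] (S : Set (Bv v)) := by
      intro i
      have h1 : r v (x i) ∈ AddSubgroup.closure (Set.range fun i => r v (x i)) :=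
        AddSubgroup.subset_closure ⟨i, rfl⟩
      rw [hSclos] at h1
      have h2 : AddSubgroup.closure (S : Set (Bv v)) ≤
          (Submodule.span ℤ_[ℓ] (S : Set (Bv v))).toAddSubgroup :=
        (AddSubgroup.closure_le _).2 Submodule.subset_span
      exact h2 h1
    exact trace_zero_fix ℓ e he S hScard _ hyS
  · rintro ⟨M, htr, hMx⟩
    have hM : ∀ i j, M i j = if i = j then 1 else 0 := by
      intro i j
      have h := Fintype.linearIndependent_iff.1 hli
        (fun j => M i j - if i = j then 1 else 0) ?_ j
      · exact sub_eq_zero.1 h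
      · have : ∑ k, (M i k - if i = k then 1 else 0) • x k
            = (∑ k, M i k • x k) - x i := by
          simp only [sub_smul, ite_smul, one_smul, zero_smul]
          rw [Finset.sum_sub_distrib]
          congr 1
          simp
        rw [this, hMx i, sub_self]
    have htr' : M.trace = (e : ℤ_[ℓ]) := by
      simp [Matrix.trace, Matrix.diag, hM]
    rw [htr] at htr'
    have : (e : ℤ_[ℓ]) = 0 := htr'.symm
    have := Nat.cast_eq_zero.1 this
    omega
end
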